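/- Let M ≥ 1 and t ∈ {1, …, M} be integers, φ > 2, 0 ≤ η_min ≤ η_max reals, and 0 < λ_l ≤ λ ≤ λ_u reals with η_max·λ ≤ 1. Let η_m (1 ≤ m ≤ M) be the UBA learning rates, and set τ = 4·λ_l·(η_max − η_min)·(1 + cos((2t − 1)π/(2M)))·M/((φ − 2)π). Then ∏_{m=1}^{t} (1 − η_m λ)² ≤ exp(−2λ·η_min·t) · ((4M + (φ − 2)π)/(4M + (φ − 2)π·t))^τ. -/

import Mathlib

/-!
Writing `θ_m` for the angle of step `m`, the denominator of `η_m` is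
`4 + (φ - 2)(1 - cos θ_m) ≤ 4 + (φ - 2) θ_m`, and `1 + cos θ_m ≥ 1 + cos θ_t` for `m ≤ t`
since cosine decreases on `[0, π]`. Hence `η_m - η_min` dominates a multiple of
`1 / (4 + (φ - 2) θ_m)`, a shifted harmonic sum whose partial sums are bounded below by a
logarithm through `log (1 + x) ≤ x`. Since `(1 - x)² ≤ exp (-2x)` for `x ≤ 1`, the product is at
most `exp (-2λ ∑ η_m)`, and the logarithmic bound on `∑ η_m` turns into the power of the ratio.
-/

open Real Finset

/-- The UBA learning rate at step `m` of a phase of length `M`. -/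
noncomputable def ubaRate (M : ℕ) (ηmin ηmax φ : ℝ) (m : ℕ) : ℝ :=
  (ηmax - ηmin) * (2 * (1 + Real.cos ((2 * (m : ℝ) - 1) * Real.pi / (2 * (M : ℝ))))) /
    (2 * φ + (2 - φ) * (1 + Real.cos ((2 * (m : ℝ) - 1) * Real.pi / (2 * (M : ℝ))))) + ηmin

lemma one_sub_sq_le_exp_neg_two_mul {x : ℝ} (hx : x ≤ 1) : (1 - x) ^ 2 ≤ exp (-(2 * x)) := by
  calc (1 - x) ^ 2 ≤ exp (-x) ^ 2 := pow_le_pow_left₀ (by linarith) (one_sub_le_exp_neg x) 2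
    _ = exp (-(2 * x)) := by rw [← exp_nat_mul]; ring_nf

lemma prod_one_sub_sq_le_exp {ι : Type*} (s : Finset ι) (x : ι → ℝ) (hx : ∀ i ∈ s, x i ≤ 1) :
    ∏ i ∈ s, (1 - x i) ^ 2 ≤ exp (-(2 * ∑ i ∈ s, x i)) := by
  rw [mul_sum, ← sum_neg_distrib, exp_sum]
  exact prod_le_prod (fun i _ => sq_nonneg _) fun i hi => one_sub_sq_le_exp_neg_two_mul (hx i hi)

lemma log_div_le_sum_inv {s : ℝ} (hs : 0 < s) (t : ℕ) :
    log ((s + t) / s) ≤ ∑ k ∈ range t, 1 / (s + k) := by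
  induction t with
  | zero => simp
  | succ t ih =>
    have hstep : log ((s + (t + 1)) / (s + t)) ≤ 1 / (s + t) := by
      calc _ ≤ (s + (t + 1)) / (s + t) - 1 := log_le_sub_one_of_pos (by positivity)
        _ = 1 / (s + t) := by field_simp; ring
    calc log ((s + (t + 1 : ℕ)) / s)
        = log ((s + t) / s) + log ((s + (t + 1)) / (s + t)) := by
          push_cast
          rw [← log_mul (by positivity) (by positivity)]
          field_simp
      _ ≤ _ := by rw [sum_range_succ]; gcongr

noncomputable def ubaAngle (M m : ℕ) : ℝ := (2 * (m : ℝ) - 1) * π / (2 * M)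

lemma ubaRate_eq (M : ℕ) (ηmin ηmax φ : ℝ) (m : ℕ) :
    ubaRate M ηmin ηmax φ m = (ηmax - ηmin) * (2 * (1 + cos (ubaAngle M m))) /
      (4 + (φ - 2) * (1 - cos (ubaAngle M m))) + ηmin := by
  unfold ubaRate ubaAngle; ring

lemma ubaAngle_nonneg (M : ℕ) {m : ℕ} (hm : 1 ≤ m) : 0 ≤ ubaAngle M m := by
  have : (1 : ℝ) ≤ m := by exact_mod_cast hm
  exact div_nonneg (mul_nonneg (by linarith) pi_pos.le) (by positivity)

lemma ubaAngle_le_pi {M m : ℕ} (hm : m ≤ M) : ubaAngle M m ≤ π := by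
  have : (m : ℝ) ≤ M := by exact_mod_cast hm
  exact div_le_of_le_mul₀ (by positivity) pi_pos.le (by nlinarith [pi_pos])

lemma ubaAngle_mono (M : ℕ) {m t : ℕ} (hmt : m ≤ t) : ubaAngle M m ≤ ubaAngle M t := by
  have : (m : ℝ) ≤ t := by exact_mod_cast hmt
  unfold ubaAngle; gcongr

section Rate

variable {M : ℕ} {ηmin ηmax φ : ℝ}

lemma ubaRate_le (hφ : 0 ≤ φ) (h : ηmin ≤ ηmax) (m : ℕ) : ubaRate M ηmin ηmax φ m ≤ ηmax := by
  have hc := cos_le_one (ubaAngle M m)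
  have hc' := neg_one_le_cos (ubaAngle M m)
  have hden : 2 * (1 + cos (ubaAngle M m)) ≤ 4 + (φ - 2) * (1 - cos (ubaAngle M m)) := by
    nlinarith
  have : (ηmax - ηmin) * (2 * (1 + cos (ubaAngle M m))) /
      (4 + (φ - 2) * (1 - cos (ubaAngle M m))) ≤ ηmax - ηmin :=
    div_le_of_le_mul₀ (by linarith) (by linarith) (mul_le_mul_of_nonneg_left hden (by linarith))
  rw [ubaRate_eq]; linarith

lemma ubaRate_ge (hφ : 2 ≤ φ) (h : ηmin ≤ ηmax) {m t : ℕ} (hm : 1 ≤ m) (hmt : m ≤ t)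
    (htM : t ≤ M) :
    ηmin + (ηmax - ηmin) * (2 * (1 + cos (ubaAngle M t))) / (4 + (φ - 2) * ubaAngle M m) ≤
      ubaRate M ηmin ηmax φ m := by
  have hθ := ubaAngle_nonneg M hm
  have hcos : cos (ubaAngle M t) ≤ cos (ubaAngle M m) :=
    cos_le_cos_of_nonneg_of_le_pi hθ (ubaAngle_le_pi htM) (ubaAngle_mono M hmt)
  have h1cos : 1 - cos (ubaAngle M m) ≤ ubaAngle M m := by
    have := abs_cos_sub_cos_le (ubaAngle M m) 0
    rw [cos_zero, sub_zero, abs_of_nonneg hθ, abs_sub_comm] at this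
    exact (le_abs_self _).trans this
  have hcm := neg_one_le_cos (ubaAngle M m)
  have hden : 0 < 4 + (φ - 2) * (1 - cos (ubaAngle M m)) := by
    nlinarith [cos_le_one (ubaAngle M m)]
  rw [ubaRate_eq, add_comm ηmin]
  gcongr
  exact mul_nonneg (by linarith) (by linarith)

end Rate

lemma sum_inv_four_add_mul_ubaAngle_ge {M : ℕ} (hM : 0 < M) {a : ℝ} (ha : 0 < a) (t : ℕ) :
    M / (a * π) * log ((4 * M + a * π * t) / (4 * M + a * π)) ≤
      ∑ m ∈ Icc 1 t, 1 / (4 + a * ubaAngle M m) := by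
  have haπ : 0 < a * π := mul_pos ha pi_pos
  set s : ℝ := 4 * M / (a * π) + 1 / 2 with hs
  have hs0 : 0 < s := by positivity
  have hterm : ∀ k : ℕ, 1 / (4 + a * ubaAngle M (k + 1)) = M / (a * π) * (1 / (s + k)) := by
    intro k
    have hden : 4 + a * ubaAngle M (k + 1) = a * π / M * (s + k) := by
      rw [hs, ubaAngle]
      push_cast
      field_simp
      ring
    rw [hden]
    field_simp
  have hratio : (4 * M + a * π * t) / (4 * M + a * π) ≤ (s + t) / s := by
    rw [hs, div_le_div_iff₀ (by positivity) (by positivity)]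
    field_simp
    nlinarith [mul_nonneg haπ.le (Nat.cast_nonneg (α := ℝ) t)]
  calc M / (a * π) * log ((4 * M + a * π * t) / (4 * M + a * π))
      ≤ M / (a * π) * log ((s + t) / s) := by gcongr
    _ ≤ M / (a * π) * ∑ k ∈ range t, 1 / (s + k) := by gcongr; exact log_div_le_sum_inv hs0 t
    _ = ∑ m ∈ Icc 1 t, 1 / (4 + a * ubaAngle M m) := by
      rw [mul_sum, ← Ico_add_one_right_eq_Icc, sum_Ico_eq_sum_range, add_tsub_cancel_right]
      simp only [add_comm 1, hterm]

lemma sum_ubaRate_ge {M t : ℕ} (hM : 0 < M) (htM : t ≤ M) {φ : ℝ} (hφ : 2 < φ) {ηmin ηmax : ℝ}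
    (h : ηmin ≤ ηmax) :
    t * ηmin + 2 * (ηmax - ηmin) * (1 + cos (ubaAngle M t)) *
        (M / ((φ - 2) * π) * log ((4 * M + (φ - 2) * π * t) / (4 * M + (φ - 2) * π))) ≤
      ∑ m ∈ Icc 1 t, ubaRate M ηmin ηmax φ m := by
  have hct : 0 ≤ 2 * (ηmax - ηmin) * (1 + cos (ubaAngle M t)) :=
    mul_nonneg (by linarith) (by linarith [neg_one_le_cos (ubaAngle M t)])
  calc _ ≤ t * ηmin + 2 * (ηmax - ηmin) * (1 + cos (ubaAngle M t)) *
        ∑ m ∈ Icc 1 t, 1 / (4 + (φ - 2) * ubaAngle M m) := by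
        gcongr
        exact sum_inv_four_add_mul_ubaAngle_ge hM (by linarith) t
    _ = ∑ m ∈ Icc 1 t, (ηmin + (ηmax - ηmin) * (2 * (1 + cos (ubaAngle M t))) /
        (4 + (φ - 2) * ubaAngle M m)) := by
        rw [sum_add_distrib, sum_const, Nat.card_Icc, add_tsub_cancel_right, nsmul_eq_mul,
          mul_sum]
        congr 1
        refine sum_congr rfl fun m _ => ?_
        ring
    _ ≤ ∑ m ∈ Icc 1 t, ubaRate M ηmin ηmax φ m := by
      refine sum_le_sum fun m hm => ?_
      obtain ⟨hm1, hmt⟩ := mem_Icc.mp hm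
      exact ubaRate_ge hφ.le h hm1 hmt htM

theorem uba_contraction_bound_phi_gt_two
    (M t : ℕ) (hM : 1 ≤ M) (ht1 : 1 ≤ t) (ht2 : t ≤ M)
    (φ : ℝ) (hφ : 2 < φ) (ηmin ηmax : ℝ) (h1 : ηmin ≤ ηmax)
    (lamL lam : ℝ) (hl : 0 < lamL) (hl1 : lamL ≤ lam)
    (hstep : ηmax * lam ≤ 1) :
    ∏ m ∈ Finset.Icc 1 t, (1 - ubaRate M ηmin ηmax φ m * lam) ^ 2 ≤
      Real.exp (-2 * lam * ηmin * (t : ℝ)) *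
        ((4 * (M : ℝ) + (φ - 2) * Real.pi) / (4 * (M : ℝ) + (φ - 2) * Real.pi * (t : ℝ))) ^
          (4 * lamL * (ηmax - ηmin) *
            (1 + Real.cos ((2 * (t : ℝ) - 1) * Real.pi / (2 * (M : ℝ)))) * (M : ℝ) /
            ((φ - 2) * Real.pi)) := by
  have haπ : 0 < (φ - 2) * π := mul_pos (by linarith) pi_pos
  have hlam : 0 ≤ lam := by linarith
  set K := 2 * (ηmax - ηmin) * (1 + cos (ubaAngle M t)) * (M / ((φ - 2) * π))
  set L := log ((4 * M + (φ - 2) * π * t) / (4 * M + (φ - 2) * π))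
  have hK : 0 ≤ K :=
    mul_nonneg (mul_nonneg (by linarith) (by linarith [neg_one_le_cos (ubaAngle M t)]))
      (by positivity)
  have hL : 0 ≤ L := log_nonneg <| (one_le_div (by positivity)).2 <| by
    have : (1 : ℝ) ≤ t := by exact_mod_cast ht1
    nlinarith
  have hsum : t * ηmin + K * L ≤ ∑ m ∈ Icc 1 t, ubaRate M ηmin ηmax φ m := by
    have := sum_ubaRate_ge hM ht2 hφ h1
    rwa [← mul_assoc] at this
  have hrate : ∀ m ∈ Icc 1 t, ubaRate M ηmin ηmax φ m * lam ≤ 1 := fun m _ =>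
    (mul_le_mul_of_nonneg_right (ubaRate_le (by linarith) h1 m) hlam).trans hstep
  rw [rpow_def_of_pos (by positivity), ← exp_add, ← inv_div, log_inv]
  calc _ ≤ exp (-(2 * ∑ m ∈ Icc 1 t, ubaRate M ηmin ηmax φ m * lam)) :=
        prod_one_sub_sq_le_exp _ _ hrate
    _ ≤ _ := by
      gcongr
      rw [← sum_mul]
      have hτ : 4 * lamL * (ηmax - ηmin) *
            (1 + cos ((2 * (t : ℝ) - 1) * π / (2 * (M : ℝ)))) * (M : ℝ) / ((φ - 2) * π) =
          2 * lamL * K := by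
        simp only [K, ubaAngle]; ring
      rw [hτ]
      linarith [mul_le_mul_of_nonneg_left hsum hlam,
        mul_le_mul_of_nonneg_right hl1 (mul_nonneg hK hL)]
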